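/- Failure of Datalog rewritability: there exist a finite set Σ of TGDs, a Boolean CQ Q, and a set V of views with frontier-guarded Datalog definitions such that (Q, V, Σ) has the bounded treewidth view image property, Q is monotonically determined by V with respect to Σ over all instances, and yet there is no Datalog rewriting of Q over V with respect to Σ; indeed there is no rewriting expressible as a (possibly infinite) disjunction of CQs over the view schema. -/

import Mathlib

namespace MonDetPaper

/-- Relation symbols (a schema is a finite set of these). -/
abbrev RelSym : Type := ℕ
/-- First-order variables. -/
abbrev Var : Type := ℕ

/-- An atom (or fact): a relation symbol together with a list of arguments. -/
abbrev Atom (α : Type) : Type := RelSym × List α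

/-- An instance over domain `D`: a (possibly infinite) set of facts. -/
abbrev Inst (D : Type) : Type := Set (Atom D)

/-- Apply a map on domain elements to an atom. -/
def mapAtom {α β : Type} (h : α → β) (a : Atom α) : Atom β := (a.1, a.2.map h)

/-- Image of an instance under a map on domain elements. -/
def mapInst {α β : Type} (h : α → β) (I : Inst α) : Inst β := (mapAtom h) '' I

/-- `h` is a homomorphism from `I` to `J`. -/
def isHom {α β : Type} (h : α → β) (I : Inst α) (J : Inst β) : Prop :=
  ∀ a ∈ I, mapAtom h a ∈ J

/-- The instance uses only relation symbols from schema `S`. -/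
def overSchema {D : Type} (S : Finset RelSym) (I : Inst D) : Prop :=
  ∀ a ∈ I, a.1 ∈ S

/-! ### Conjunctive queries -/

/-- A Boolean conjunctive query: a finite list of atoms over variables,
all of which are (implicitly) existentially quantified. -/
abbrev BCQ : Type := List (Atom Var)

def bcqHolds {D : Type} (q : BCQ) (I : Inst D) : Prop :=
  ∃ h : Var → D, ∀ a ∈ q, mapAtom h a ∈ I

def bcqOver (S : Finset RelSym) (q : BCQ) : Prop := ∀ a ∈ q, a.1 ∈ S

/-- The canonical database of a Boolean CQ. -/
def canondb (q : BCQ) : Inst Var := { a | a ∈ q }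

/-- A conjunctive query with answer variables: a body together with the list
of answer (free) variables. -/
abbrev CQ : Type := List (Atom Var) × List Var

def cqEval {D : Type} (q : CQ) (I : Inst D) : Set (List D) :=
  { t | ∃ h : Var → D, (∀ a ∈ q.1, mapAtom h a ∈ I) ∧ t = q.2.map h }

def cqOver (S : Finset RelSym) (q : CQ) : Prop := ∀ a ∈ q.1, a.1 ∈ S

/-- A union of conjunctive queries. -/
abbrev UCQ : Type := List CQ

def ucqEval {D : Type} (q : UCQ) (I : Inst D) : Set (List D) :=
  { t | ∃ d ∈ q, t ∈ cqEval d I }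

def ucqOver (S : Finset RelSym) (q : UCQ) : Prop := ∀ d ∈ q, cqOver S d

/-- A Boolean union of conjunctive queries. -/
abbrev BUCQ : Type := List BCQ

def bucqHolds {D : Type} (q : BUCQ) (I : Inst D) : Prop := ∃ d ∈ q, bcqHolds d I

def bucqOver (S : Finset RelSym) (q : BUCQ) : Prop := ∀ d ∈ q, bcqOver S d

/-! ### Datalog -/

/-- A Datalog rule: a head atom and a body (a list of atoms). -/
abbrev DatalogRule : Type := Atom Var × List (Atom Var)
abbrev DatalogProgram : Type := List DatalogRule
/-- A Datalog query: a program together with a distinguished goal predicate. -/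
abbrev DatalogQuery : Type := DatalogProgram × RelSym

/-- The intensional predicates of a program: those appearing in rule heads. -/
def isIDB (P : DatalogProgram) (r : RelSym) : Prop := ∃ ru ∈ P, ru.1.1 = r

def ruleHolds {D : Type} (r : DatalogRule) (J : Inst D) : Prop :=
  ∀ h : Var → D, (∀ a ∈ r.2, mapAtom h a ∈ J) → mapAtom h r.1 ∈ J

/-- The least extension of `I` satisfying all rules of `P`. -/
def dlFix {D : Type} (P : DatalogProgram) (I : Inst D) : Inst D :=
  ⋂₀ { J : Inst D | I ⊆ J ∧ ∀ r ∈ P, ruleHolds r J }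

/-- Output of a Datalog query. -/
def dlEval {D : Type} (Q : DatalogQuery) (I : Inst D) : Set (List D) :=
  { t | (Q.2, t) ∈ dlFix Q.1 I }

/-- A Boolean Datalog query holds when the 0-ary goal fact is derived. -/
def dlHolds {D : Type} (Q : DatalogQuery) (I : Inst D) : Prop :=
  (Q.2, ([] : List D)) ∈ dlFix Q.1 I

/-- Well-formedness of a Datalog query over base (EDB) schema `S`:
head predicates are disjoint from `S`, body atoms are over `S` or intensional,
and the goal is intensional. -/
def dlOver (S : Finset RelSym) (Q : DatalogQuery) : Prop :=
  (∀ r ∈ Q.1, r.1.1 ∉ S ∧ ∀ a ∈ r.2, a.1 ∈ S ∨ isIDB Q.1 a.1) ∧ isIDB Q.1 Q.2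

/-- The goal predicate is 0-ary (Boolean query). -/
def dlBoolean (Q : DatalogQuery) : Prop :=
  ∀ r ∈ Q.1, r.1.1 = Q.2 → r.1.2 = []

/-- Monadic Datalog: every intensional predicate is unary
(except the 0-ary goal of a Boolean query). -/
def isMDL (Q : DatalogQuery) : Prop :=
  ∀ r ∈ Q.1, (r.1.1 = Q.2 ∧ r.1.2 = []) ∨ r.1.2.length = 1

/-- Frontier-guarded Datalog over EDB schema `S`: every rule body contains
an EDB atom containing all head variables. -/
def isFGDL (S : Finset RelSym) (Q : DatalogQuery) : Prop :=
  ∀ r ∈ Q.1, ∃ a ∈ r.2, a.1 ∈ S ∧ ∀ x ∈ r.1.2, x ∈ a.2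

/-- Extensionally-connected Datalog: in each rule, the graph on the head
variables whose edges join variables co-occurring in an EDB body atom
is connected. -/
def isEC (S : Finset RelSym) (Q : DatalogQuery) : Prop :=
  ∀ r ∈ Q.1, ∀ x ∈ r.1.2, ∀ y ∈ r.1.2,
    Relation.ReflTransGen (fun u v => ∃ a ∈ r.2, a.1 ∈ S ∧ u ∈ a.2 ∧ v ∈ a.2) x y

/-! ### Existential rules (TGDs) -/

/-- A tuple-generating dependency: body and head, each a list of atoms.
Head variables not occurring in the body are existentially quantified. -/
abbrev TGD : Type := List (Atom Var) × List (Atom Var)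

def varsIn (l : List (Atom Var)) : Set Var := { x | ∃ a ∈ l, x ∈ a.2 }

def tgdHolds {D : Type} (τ : TGD) (I : Inst D) : Prop :=
  ∀ h : Var → D, (∀ a ∈ τ.1, mapAtom h a ∈ I) →
    ∃ h' : Var → D, (∀ x ∈ varsIn τ.1, h' x = h x) ∧ ∀ a ∈ τ.2, mapAtom h' a ∈ I

def sigmaHolds {D : Type} (sg : List TGD) (I : Inst D) : Prop :=
  ∀ τ ∈ sg, tgdHolds τ I

def tgdOver (S : Finset RelSym) (τ : TGD) : Prop :=
  (∀ a ∈ τ.1, a.1 ∈ S) ∧ (∀ a ∈ τ.2, a.1 ∈ S)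

/-- The frontier: variables occurring both in body and head. -/
def frontier (τ : TGD) : Set Var := varsIn τ.1 ∩ varsIn τ.2

/-- A linear TGD has a single body atom. -/
def linearTGD (τ : TGD) : Prop := τ.1.length = 1

/-- A frontier-one TGD has (at most) one frontier variable. -/
def frontierOne (τ : TGD) : Prop := (frontier τ).Subsingleton

/-- A frontier-guarded TGD: some body atom contains all frontier variables. -/
def frontierGuarded (τ : TGD) : Prop := ∃ a ∈ τ.1, ∀ x ∈ frontier τ, x ∈ a.2

/-- A full TGD has no existentially quantified head variables. -/
def fullTGD (τ : TGD) : Prop := varsIn τ.2 ⊆ varsIn τ.1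

/-- A Unary Inclusion Dependency: a frontier-one linear TGD with no
repeated variables (and no constants). -/
def isUID (τ : TGD) : Prop :=
  linearTGD τ ∧ frontierOne τ ∧ (∀ a ∈ τ.1, a.2.Nodup) ∧ (∀ a ∈ τ.2, a.2.Nodup)

/-! ### Views -/

abbrev CQViews : Type := List (RelSym × CQ)
abbrev UCQViews : Type := List (RelSym × UCQ)
abbrev DLViews : Type := List (RelSym × DatalogQuery)

def cqViewImage {D : Type} (V : CQViews) (I : Inst D) : Inst D :=
  { a | ∃ vd ∈ V, vd.1 = a.1 ∧ a.2 ∈ cqEval vd.2 I }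

def ucqViewImage {D : Type} (V : UCQViews) (I : Inst D) : Inst D :=
  { a | ∃ vd ∈ V, vd.1 = a.1 ∧ a.2 ∈ ucqEval vd.2 I }

def dlViewImage {D : Type} (V : DLViews) (I : Inst D) : Inst D :=
  { a | ∃ vd ∈ V, vd.1 = a.1 ∧ a.2 ∈ dlEval vd.2 I }

/-! ### Monotonic determinacy and rewritings -/

/-- `holdsQ` is monotonically determined over the views (given by the view-image
operator `vim`) with respect to the rules `sg`, over all (possibly infinite)
instances over schema `S`. -/
def monDet (S : Finset RelSym)
    (holdsQ : (D : Type) → Inst D → Prop)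
    (vim : (D : Type) → Inst D → Inst D)
    (sg : List TGD) : Prop :=
  ∀ (D : Type) (I I' : Inst D), overSchema S I → overSchema S I' →
    sigmaHolds sg I → sigmaHolds sg I' →
    vim D I ⊆ vim D I' → holdsQ D I → holdsQ D I'

/-- Monotonic determinacy over finite instances. -/
def monDetFin (S : Finset RelSym)
    (holdsQ : (D : Type) → Inst D → Prop)
    (vim : (D : Type) → Inst D → Inst D)
    (sg : List TGD) : Prop :=
  ∀ (D : Type) (I I' : Inst D), I.Finite → I'.Finite →
    overSchema S I → overSchema S I' →
    sigmaHolds sg I → sigmaHolds sg I' →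
    vim D I ⊆ vim D I' → holdsQ D I → holdsQ D I'

/-- `holdsR` (a Boolean query over the view schema) is a rewriting of the
Boolean query `holdsQ` w.r.t. the views `vim` and rules `sg`:
on every instance satisfying the rules, evaluating the rewriting on the view
image gives the value of the query. -/
def isRewriting (S : Finset RelSym)
    (holdsQ : (D : Type) → Inst D → Prop)
    (vim : (D : Type) → Inst D → Inst D)
    (sg : List TGD)
    (holdsR : (D : Type) → Inst D → Prop) : Prop :=
  ∀ (D : Type) (I : Inst D), overSchema S I → sigmaHolds sg I →
    (holdsR D (vim D I) ↔ holdsQ D I)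

/-- The finite-instance variant of being a rewriting. -/
def isRewritingFin (S : Finset RelSym)
    (holdsQ : (D : Type) → Inst D → Prop)
    (vim : (D : Type) → Inst D → Inst D)
    (sg : List TGD)
    (holdsR : (D : Type) → Inst D → Prop) : Prop :=
  ∀ (D : Type) (I : Inst D), I.Finite → overSchema S I → sigmaHolds sg I →
    (holdsR D (vim D I) ↔ holdsQ D I)

/-! ### Universal models (the chase), certain answers -/

/-- `C` (with embedding `ι` of the domain of `I`) is a chase/universal model of
`I` with respect to the rules `sg`: it contains a homomorphic image of `I`,
satisfies the rules, and maps homomorphically (compatibly) into every instance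
satisfying the rules and containing a homomorphic image of `I`. -/
def isUnivModel (sg : List TGD) {D E : Type} (I : Inst D) (C : Inst E) (ι : D → E) : Prop :=
  isHom ι I C ∧ sigmaHolds sg C ∧
  ∀ (F : Type) (J : Inst F) (f : D → F), isHom f I J → sigmaHolds sg J →
    ∃ g : E → F, isHom g C J ∧ ∀ d, g (ι d) = f d

/-- `I ∧ sg ⊨ Q`: the Boolean query `holdsQ` holds in every instance (over `S`)
containing (a copy of) `I` and satisfying the rules `sg`. -/
def certain (S : Finset RelSym) (sg : List TGD)
    (holdsQ : (E : Type) → Inst E → Prop) {D : Type} (I : Inst D) : Prop :=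
  ∀ (E : Type) (e : D → E), Function.Injective e →
    ∀ J : Inst E, overSchema S J → mapInst e I ⊆ J → sigmaHolds sg J → holdsQ E J

/-! ### CQ approximations of a Datalog query -/

/-- A CQ approximation of Datalog query `Q`: a Boolean CQ over the base schema
contained in `Q` (Datalog queries are unions of their CQ approximations). -/
def isCQApprox (S : Finset RelSym) (Q : DatalogQuery) (q : BCQ) : Prop :=
  bcqOver S q ∧
  ∀ (D : Type) (I : Inst D), overSchema S I → bcqHolds q I → dlHolds Q I

/-! ### Backward view mapping for UCQ views -/

/-- Assignment used to instantiate the chosen CQ disjunct `q` for the view fact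
`a`: answer variables are identified with the corresponding entries of the fact
tuple, all other variables become fresh nulls tagged by `a`. -/
def backAssign {D : Type} (a : Atom D) (q : CQ) (x : Var) : D ⊕ (Atom D × Var) :=
  if x ∈ q.2 then
    match a.2[q.2.idxOf x]? with
    | some d => Sum.inl d
    | none => Sum.inr (a, x)
  else Sum.inr (a, x)

/-- `BackV_V(J)`: the set of base-schema instances obtained by choosing, for
each view fact of `J`, one CQ disjunct of the corresponding view definition and
adding its canonical database, with answer variables identified with the fact's
tuple and all other variables replaced by fresh nulls. -/
def backV {D : Type} (V : UCQViews) (J : Inst D) : Set (Inst (D ⊕ (Atom D × Var))) :=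
  { K | ∃ choice : Atom D → CQ,
      (∀ a ∈ J, ∃ vd ∈ V, vd.1 = a.1 ∧ choice a ∈ vd.2 ∧ (choice a).2.length = a.2.length) ∧
      K = { b | ∃ a ∈ J, ∃ c ∈ (choice a).1, b = mapAtom (backAssign a (choice a)) c } }

/-! ### Q-entailing view instances -/

/-- A view-schema instance `J` is Q-entailing w.r.t. rules `sg` and the views
(given by view image operator `vim`): every instance over `S` satisfying the
rules whose view image contains (a copy of) `J` satisfies the query. -/
def qEntailing (S : Finset RelSym) (sg : List TGD)
    (vim : (E : Type) → Inst E → Inst E)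
    (holdsQ : (E : Type) → Inst E → Prop)
    {D : Type} (J : Inst D) : Prop :=
  ∀ (E : Type) (e : D → E), Function.Injective e →
    ∀ I : Inst E, overSchema S I → sigmaHolds sg I →
      mapInst e J ⊆ vim E I → holdsQ E I


/-- An instance has treewidth at most `k`: there is a tree decomposition
whose bags have at most `k + 1` elements, every fact's elements lie in a
common bag, and for each element the set of bags containing it is connected. -/
def hasTreewidthLE {D : Type} (I : Inst D) (k : ℕ) : Prop :=
  ∃ (ν : Type) (G : SimpleGraph ν) (bag : ν → Set D),
    G.IsTree ∧
    (∀ v : ν, ∃ s : Finset D, bag v ⊆ ↑s ∧ s.card ≤ k + 1) ∧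
    (∀ a ∈ I, ∃ v : ν, ∀ d ∈ a.2, d ∈ bag v) ∧
    (∀ d : D, (SimpleGraph.induce {v : ν | d ∈ bag v} G).Preconnected)


/-- The bounded treewidth view image property for a Boolean CQ `q` (whose only
CQ approximation is itself): there is `k` such that the instance obtained by
chasing `Canondb q` with the rules and applying the views has treewidth at
most `k`. -/
def btvipCQ (S : Finset RelSym) (q : BCQ) (V : DLViews) (sg : List TGD) : Prop :=
  ∃ k : ℕ, ∃ (E : Type) (C : Inst E) (ι : Var → E),
    isUnivModel sg (canondb q) C ι ∧ overSchema S C ∧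
    hasTreewidthLE (dlViewImage V C) k


/-!
From `G` the rules build an infinite `E`-chain of `A`-nodes, all labelled `U`. The views expose
`E` (as `VE`) and the nodes with an `E`-path to a `U`-node (as `VW`). An `R`-fact walks two
`E`-paths in step; when the first reaches a `U`-node, `T` is raised on the second, travels along
it, and yields `G` once it meets a `U`-node.

Monotone determinacy: if `V(I) ⊆ V(I')` and `I ⊨ G`, then `I'` contains the chain and every chain
node has a `U`-path in `I'`. Along the chain the length of a shortest `U`-path cannot decrease
forever, and at an edge where it does not decrease the rules derive `G` in `I'`.

No rewriting: the chase satisfies `G`, but every finite part of its view image already occurs in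
the view image of a long enough finite chain with `U` only at its end, which satisfies the rules
but not `G`. A Datalog query or a union of CQs holds as soon as a finite part of its input does,
so it cannot separate the two. The view image of the chase is a path, hence of treewidth one.
-/

section Datalog

variable {D : Type}

lemma subset_dlFix (P : DatalogProgram) (I : Inst D) : I ⊆ dlFix P I :=
  fun _ ha => Set.mem_sInter.2 fun _ hJ => hJ.1 ha

lemma dlFix_subset {P : DatalogProgram} {I J : Inst D} (hIJ : I ⊆ J)
    (hJ : ∀ r ∈ P, ruleHolds r J) : dlFix P I ⊆ J :=
  Set.sInter_subset_of_mem ⟨hIJ, hJ⟩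

lemma ruleHolds_dlFix {P : DatalogProgram} {r : DatalogRule} (hr : r ∈ P) (I : Inst D) :
    ruleHolds r (dlFix P I) :=
  fun h hb => Set.mem_sInter.2 fun J hJ =>
    hJ.2 r hr h fun a ha => Set.mem_sInter.1 (hb a ha) J hJ

lemma dlFix_mono (P : DatalogProgram) {I I' : Inst D} (h : I ⊆ I') : dlFix P I ⊆ dlFix P I' :=
  dlFix_subset (h.trans (subset_dlFix P I')) fun _ hr => ruleHolds_dlFix hr I'

lemma exists_finite_of_mem_dlFix {P : DatalogProgram} {I : Inst D} {a : Atom D}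
    (ha : a ∈ dlFix P I) : ∃ I₀ ⊆ I, I₀.Finite ∧ a ∈ dlFix P I₀ := by
  refine dlFix_subset (J := {b | ∃ I₀ ⊆ I, I₀.Finite ∧ b ∈ dlFix P I₀})
    (fun b hb => ⟨{b}, by simpa using hb, Set.finite_singleton b, subset_dlFix P _ rfl⟩)
    (fun r hr h hbody => ?_) ha
  choose! F hFI hFfin hF using hbody
  refine ⟨⋃ b ∈ {b | b ∈ r.2}, F b, Set.iUnion₂_subset fun b _ => hFI b ‹_›,
    r.2.finite_toSet.biUnion fun b hb => hFfin b hb, ruleHolds_dlFix hr _ h fun b hb => ?_⟩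
  exact dlFix_mono P (Set.subset_biUnion_of_mem (u := F) hb) (hF b hb)

end Datalog

lemma overSchema.notMem {D : Type} {S : Finset RelSym} {I : Inst D} (hI : overSchema S I)
    {r : RelSym} (hr : r ∉ S) (l : List D) : (r, l) ∉ I :=
  fun h => hr (hI _ h)

def FinitelyWitnessed (holdsR : (D : Type) → Inst D → Prop) : Prop :=
  ∀ (D : Type) (J : Inst D), holdsR D J → ∃ J₀ ⊆ J, J₀.Finite ∧ ∀ J', J₀ ⊆ J' → holdsR D J'

lemma finitelyWitnessed_dlHolds (R : DatalogQuery) : FinitelyWitnessed fun _ J => dlHolds R J :=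
  fun _ _ hR =>
    let ⟨J₀, hJ₀, hfin, hR₀⟩ := exists_finite_of_mem_dlFix hR
    ⟨J₀, hJ₀, hfin, fun _ hJ' => dlFix_mono R.1 hJ' hR₀⟩

lemma finitelyWitnessed_exists_bcqHolds {ι : Type} (F : ι → BCQ) :
    FinitelyWitnessed fun _ J => ∃ i, bcqHolds (F i) J := by
  rintro D J ⟨i, h, hh⟩
  exact ⟨mapAtom h '' {a | a ∈ F i}, by rintro _ ⟨a, ha, rfl⟩; exact hh a ha,
    (F i).finite_toSet.image _, fun J' hJ' => ⟨i, h, fun a ha => hJ' ⟨a, ha, rfl⟩⟩⟩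

lemma not_isRewriting_of_finitelyWitnessed {S : Finset RelSym}
    {holdsQ : (D : Type) → Inst D → Prop} {vim : (D : Type) → Inst D → Inst D} {sg : List TGD}
    {holdsR : (D : Type) → Inst D → Prop} (hR : FinitelyWitnessed holdsR)
    {D ι : Type} {l : Filter ι} [l.NeBot] {I : Inst D} (I' : ι → Inst D)
    (hI : overSchema S I) (hσ : sigmaHolds sg I) (hQ : holdsQ D I)
    (hI' : ∀ i, overSchema S (I' i)) (hσ' : ∀ i, sigmaHolds sg (I' i))
    (hQ' : ∀ i, ¬ holdsQ D (I' i))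
    (hvim : ∀ a ∈ vim D I, ∀ᶠ i in l, a ∈ vim D (I' i)) :
    ¬ isRewriting S holdsQ vim sg holdsR := by
  intro hrw
  obtain ⟨J₀, hJ₀, hfin, hext⟩ := hR D _ ((hrw D I hI hσ).2 hQ)
  obtain ⟨i, hi⟩ := (hfin.eventually_all.2 fun a ha => hvim a (hJ₀ ha)).exists
  exact hQ' i ((hrw D _ (hI' i) (hσ' i)).1 (hext _ hi))

lemma fullTGD_of_forall_mem {τ : TGD} (h : ∀ a ∈ τ.2, ∀ x ∈ a.2, ∃ b ∈ τ.1, x ∈ b.2) :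
    fullTGD τ :=
  fun x ⟨a, ha, hx⟩ => h a ha x hx

lemma tgdHolds_iff_of_fullTGD {D : Type} {τ : TGD} {I : Inst D} (hτ : fullTGD τ) :
    tgdHolds τ I ↔ ∀ h : Var → D, (∀ a ∈ τ.1, mapAtom h a ∈ I) → ∀ a ∈ τ.2, mapAtom h a ∈ I := by
  refine ⟨fun hI h hb a ha => ?_, fun hI h hb => ⟨h, fun _ _ => rfl, hI h hb⟩⟩
  obtain ⟨h', hh', hhead⟩ := hI h hb
  have : mapAtom h' a = mapAtom h a :=
    congrArg _ (List.map_congr_left fun x hx => hh' x (hτ ⟨a, ha, hx⟩))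
  exact this ▸ hhead a ha

section Treewidth

open SimpleGraph

lemma hasse_nat_adj {m n : ℕ} : (hasse ℕ).Adj m n ↔ m + 1 = n ∨ n + 1 = m := by
  simp [hasse_adj]

lemma hasse_nat_walk_le {n : ℕ} :
    ∀ {x y : ℕ}, ((hasse ℕ).deleteEdges {s(n, n + 1)}).Walk x y → x ≤ n → y ≤ n
  | _, _, .nil, hx => hx
  | _, _, .cons hadj w, hx => by
    refine hasse_nat_walk_le w ?_
    rw [deleteEdges_adj, hasse_nat_adj, Set.mem_singleton_iff] at hadj
    by_contra! hz
    exact hadj.2 (by rw [Sym2.eq_iff]; omega)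

lemma isTree_hasse_nat : (hasse ℕ).IsTree := by
  refine ⟨⟨hasse_preconnected_of_succ ℕ⟩, isAcyclic_iff_forall_adj_isBridge.2 ?_⟩
  rintro v w hvw ⟨p⟩
  rcases hasse_nat_adj.1 hvw with rfl | rfl
  · exact absurd (hasse_nat_walk_le p le_rfl) (by omega)
  · rw [Sym2.eq_swap] at p
    exact absurd (hasse_nat_walk_le p.reverse le_rfl) (by omega)

/-- The tree decomposition is the path `ℕ` with bags `{f n, f (n + 1)}`. -/
lemma hasTreewidthLE_one_of_chain {D : Type} {I : Inst D} (f : ℕ → D) (hf : f.Injective)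
    (hI : ∀ a ∈ I, ∃ n, ∀ d ∈ a.2, d = f n ∨ d = f (n + 1)) : hasTreewidthLE I 1 := by
  classical
  refine ⟨ℕ, hasse ℕ, fun n => {f n, f (n + 1)}, isTree_hasse_nat,
    fun n => ⟨{f n, f (n + 1)}, by simp, Finset.card_le_two⟩, hI, fun d => ?_⟩
  rintro ⟨u, hu⟩ ⟨v, hv⟩
  have hu' : d = f u ∨ d = f (u + 1) := hu
  have hv' : d = f v ∨ d = f (v + 1) := hv
  have huv : u = v ∨ u + 1 = v ∨ v + 1 = u := by
    rcases hu' with rfl | rfl <;> rcases hv' with h | h <;> have := hf h <;> omega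
  rcases huv with rfl | huv
  · rfl
  · exact Adj.reachable (by simpa [hasse_nat_adj] using huv)

end Treewidth

namespace ChainExample

open Sum

section Atoms

variable {α : Type}

def G : Atom α := (0, [])
def A (x : α) : Atom α := (1, [x])
def U (x : α) : Atom α := (2, [x])
def E (x y : α) : Atom α := (3, [x, y])
def R (x y : α) : Atom α := (4, [x, y])
def T (x : α) : Atom α := (5, [x])
def VE (x y : α) : Atom α := (6, [x, y])
def VW (x : α) : Atom α := (7, [x])

@[simp] lemma VE_inj {x y u v : α} : VE x y = VE u v ↔ x = u ∧ y = v := by simp [VE]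
@[simp] lemma VW_inj {x u : α} : VW x = VW u ↔ x = u := by simp [VW]
@[simp] lemma VE_ne_VW {x y u : α} : VE x y ≠ VW u := by simp [VE, VW]
@[simp] lemma VW_ne_VE {x y u : α} : VW u ≠ VE x y := by simp [VE, VW]

end Atoms

def baseSchema : Finset RelSym := {0, 1, 2, 3, 4, 5}
def viewSchema : Finset RelSym := {6, 7}

def sigma : List TGD :=
  [ ([G], [A 0]),
    ([A 0], [E 0 1, A 1]),
    ([A 0], [U 0]),
    ([E 0 1], [R 0 1]),
    ([R 0 1, E 0 2, E 1 3], [R 2 3]),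
    ([U 0, R 0 1], [T 1]),
    ([T 0, E 0 1], [T 1]),
    ([T 0, U 0], [G]) ]

def query : BCQ := [G]

def viewE : DatalogQuery := ([(VE 0 1, [E 0 1])], 6)
def viewW : DatalogQuery := ([(VW 0, [U 0]), (VW 0, [E 0 1, VW 1])], 7)
def views : DLViews := [(6, viewE), (7, viewW)]

variable {D : Type}

@[simp] lemma mapAtom_G (h : Var → D) : mapAtom h G = G := rfl
@[simp] lemma mapAtom_A (h : Var → D) (x : Var) : mapAtom h (A x) = A (h x) := rfl
@[simp] lemma mapAtom_U (h : Var → D) (x : Var) : mapAtom h (U x) = U (h x) := rfl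
@[simp] lemma mapAtom_E (h : Var → D) (x y : Var) : mapAtom h (E x y) = E (h x) (h y) := rfl
@[simp] lemma mapAtom_R (h : Var → D) (x y : Var) : mapAtom h (R x y) = R (h x) (h y) := rfl
@[simp] lemma mapAtom_T (h : Var → D) (x : Var) : mapAtom h (T x) = T (h x) := rfl
@[simp] lemma mapAtom_VE (h : Var → D) (x y : Var) : mapAtom h (VE x y) = VE (h x) (h y) := rfl
@[simp] lemma mapAtom_VW (h : Var → D) (x : Var) : mapAtom h (VW x) = VW (h x) := rfl

structure SigmaClosed (I : Inst D) : Prop where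
  A_of_G : G ∈ I → ∃ x, A x ∈ I
  E_of_A : ∀ x, A x ∈ I → ∃ y, E x y ∈ I ∧ A y ∈ I
  U_of_A : ∀ x, A x ∈ I → U x ∈ I
  R_of_E : ∀ x y, E x y ∈ I → R x y ∈ I
  R_of_R : ∀ x y u v, R x y ∈ I → E x u ∈ I → E y v ∈ I → R u v ∈ I
  T_of_U : ∀ x y, U x ∈ I → R x y ∈ I → T y ∈ I
  T_of_T : ∀ x y, T x ∈ I → E x y ∈ I → T y ∈ I
  G_of_T : ∀ x, T x ∈ I → U x ∈ I → G ∈ I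

/- The variables of the rules are `0, 1, 2, 3`, so `fun i => l.getD i _` instantiates them
with the entries of `l`. -/
lemma SigmaClosed.of_sigmaHolds [Nonempty D] {I : Inst D} (hσ : sigmaHolds sigma I) :
    SigmaClosed I := by
  have full : ∀ {τ}, τ ∈ sigma → (∀ a ∈ τ.2, ∀ x ∈ a.2, ∃ b ∈ τ.1, x ∈ b.2) →
      ∀ h : Var → D, (∀ a ∈ τ.1, mapAtom h a ∈ I) → ∀ a ∈ τ.2, mapAtom h a ∈ I :=
    fun hτ hfull => (tgdHolds_iff_of_fullTGD (fullTGD_of_forall_mem hfull)).1 (hσ _ hτ)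
  constructor
  · intro hG
    obtain ⟨h', -, hhead⟩ :=
      hσ ([G], [A 0]) (by simp [sigma]) (fun _ => Classical.arbitrary D) (by simpa)
    exact ⟨h' 0, by simpa using hhead (A 0) (by simp)⟩
  · intro x hx
    obtain ⟨h', hh', hhead⟩ := hσ ([A 0], [E 0 1, A 1]) (by simp [sigma]) (fun _ => x) (by simpa)
    have h'0 : h' 0 = x := hh' 0 ⟨A 0, by simp, by simp [A]⟩
    exact ⟨h' 1, by simpa [h'0] using hhead (E 0 1) (by simp), by simpa using hhead (A 1) (by simp)⟩
  · intro x hx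
    simpa using full (τ := ([A 0], [U 0])) (by simp [sigma]) (by decide)
      (fun _ => x) (by simpa) _ (List.mem_singleton_self _)
  · intro x y hxy
    simpa using full (τ := ([E 0 1], [R 0 1])) (by simp [sigma]) (by decide)
      (fun i => [x, y].getD i x) (by simpa) _ (List.mem_singleton_self _)
  · intro x y u v h1 h2 h3
    simpa using full (τ := ([R 0 1, E 0 2, E 1 3], [R 2 3])) (by simp [sigma]) (by decide)
      (fun i => [x, y, u, v].getD i x) (by simp [*]) _ (List.mem_singleton_self _)
  · intro x y h1 h2
    simpa using full (τ := ([U 0, R 0 1], [T 1])) (by simp [sigma]) (by decide)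
      (fun i => [x, y].getD i x) (by simp [*]) _ (List.mem_singleton_self _)
  · intro x y h1 h2
    simpa using full (τ := ([T 0, E 0 1], [T 1])) (by simp [sigma]) (by decide)
      (fun i => [x, y].getD i x) (by simp [*]) _ (List.mem_singleton_self _)
  · intro x h1 h2
    simpa using full (τ := ([T 0, U 0], [G])) (by simp [sigma]) (by decide)
      (fun _ => x) (by simp [*]) _ (List.mem_singleton_self _)

lemma SigmaClosed.sigmaHolds {I : Inst D} (hI : SigmaClosed I) : sigmaHolds sigma I := by
  intro τ hτ
  simp only [sigma, List.mem_cons, List.not_mem_nil, or_false] at hτ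
  rcases hτ with rfl | rfl | rfl | rfl | rfl | rfl | rfl | rfl
  · intro h hb
    obtain ⟨x, hx⟩ := hI.A_of_G (by simpa using hb)
    exact ⟨fun _ => x, fun _ hv => by simp [varsIn, G] at hv, by simpa⟩
  · intro h hb
    obtain ⟨y, hxy, hy⟩ := hI.E_of_A _ (by simpa using hb)
    refine ⟨fun i => [h 0, y].getD i y, fun v hv => ?_, by simp [hxy, hy]⟩
    obtain rfl : v = 0 := by simpa [varsIn, A] using hv
    rfl
  all_goals
    refine (tgdHolds_iff_of_fullTGD (fullTGD_of_forall_mem (by decide))).2 fun h hb => ?_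
    simp only [List.mem_cons, List.not_mem_nil, or_false, forall_eq_or_imp, forall_eq, mapAtom_G,
      mapAtom_A, mapAtom_U, mapAtom_E, mapAtom_R, mapAtom_T] at hb ⊢
  · exact hI.U_of_A _ hb
  · exact hI.R_of_E _ _ hb
  · exact hI.R_of_R _ _ _ _ hb.1 hb.2.1 hb.2.2
  · exact hI.T_of_U _ _ hb.1 hb.2
  · exact hI.T_of_T _ _ hb.1 hb.2
  · exact hI.G_of_T _ hb.1 hb.2

def HasUPath (I : Inst D) : ℕ → D → Prop
  | 0, u => U u ∈ I
  | k + 1, u => ∃ v, E u v ∈ I ∧ HasUPath I k v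

lemma dlFix_viewE (I : Inst D) :
    dlFix viewE.1 I = I ∪ {a | ∃ u v, E u v ∈ I ∧ a = VE u v} := by
  refine subset_antisymm (dlFix_subset Set.subset_union_left fun r hr h hb => ?_)
    (Set.union_subset (subset_dlFix _ _) ?_)
  · simp only [viewE, List.mem_singleton] at hr
    subst hr
    simp only [List.mem_singleton, forall_eq, mapAtom_E, mapAtom_VE] at hb ⊢
    rcases hb with hb | ⟨u, v, -, huv⟩
    · exact Or.inr ⟨_, _, hb, rfl⟩
    · simp [E, VE] at huv
  · rintro _ ⟨u, v, huv, rfl⟩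
    simpa using ruleHolds_dlFix (r := (VE 0 1, [E 0 1])) (by simp [viewE]) I
      (fun i => [u, v].getD i u) (by simpa using subset_dlFix _ _ huv)

lemma dlFix_viewW {I : Inst D} (hI : overSchema baseSchema I) :
    dlFix viewW.1 I = I ∪ {a | ∃ u k, HasUPath I k u ∧ a = VW u} := by
  refine subset_antisymm (dlFix_subset Set.subset_union_left fun r hr h hb => ?_)
    (Set.union_subset (subset_dlFix _ _) ?_)
  · simp only [viewW, List.mem_cons, List.not_mem_nil, or_false] at hr
    rcases hr with rfl | rfl
    · simp only [List.mem_singleton, forall_eq, mapAtom_U, mapAtom_VW] at hb ⊢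
      rcases hb with hb | ⟨u, k, -, hu⟩
      · exact Or.inr ⟨h 0, 0, hb, rfl⟩
      · simp [U, VW] at hu
    · simp only [List.mem_cons, forall_eq_or_imp, mapAtom_E, mapAtom_VW, List.not_mem_nil,
        IsEmpty.forall_iff, implies_true, and_true] at hb ⊢
      obtain ⟨hE, hW | ⟨u, k, hk, hu⟩⟩ := hb
      · exact absurd hW (hI.notMem (by decide) _)
      · replace hE : E (h 0) (h 1) ∈ I := hE.resolve_right fun ⟨_, _, _, h⟩ => by simp [E, VW] at h
        simp only [VW, Prod.mk.injEq, List.cons.injEq, and_true, true_and] at hu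
        exact Or.inr ⟨h 0, k + 1, ⟨h 1, hE, hu ▸ hk⟩, rfl⟩
  · rintro _ ⟨u, k, hk, rfl⟩
    induction k generalizing u with
    | zero =>
      simpa using ruleHolds_dlFix (r := (VW 0, [U 0])) (by simp [viewW]) I
        (fun _ => u) (by simpa using subset_dlFix _ _ hk)
    | succ k ih =>
      obtain ⟨v, huv, hv⟩ := hk
      simpa using ruleHolds_dlFix (r := (VW 0, [E 0 1, VW 1])) (by simp [viewW]) I
        (fun i => [u, v].getD i u) (by simpa using ⟨subset_dlFix _ _ huv, ih v hv⟩)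

lemma mem_dlViewImage_iff {I : Inst D} (hI : overSchema baseSchema I) {a : Atom D} :
    a ∈ dlViewImage views I ↔
      (∃ u v, E u v ∈ I ∧ a = VE u v) ∨ ∃ u k, HasUPath I k u ∧ a = VW u := by
  have hE : (6, a.2) ∈ dlFix viewE.1 I ↔ ∃ u v, E u v ∈ I ∧ (6, a.2) = VE u v := by
    rw [dlFix_viewE, Set.mem_union, or_iff_right (hI.notMem (by decide) _)]
    rfl
  have hW : (7, a.2) ∈ dlFix viewW.1 I ↔ ∃ u k, HasUPath I k u ∧ (7, a.2) = VW u := by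
    rw [dlFix_viewW hI, Set.mem_union, or_iff_right (hI.notMem (by decide) _)]
    rfl
  obtain ⟨r, l⟩ := a
  simp only [dlViewImage, views, dlEval, List.mem_cons, List.not_mem_nil, or_false,
    exists_eq_or_imp, exists_eq_left, Set.mem_ofPred_eq]
  change (6 = r ∧ (6, l) ∈ dlFix viewE.1 I) ∨ (7 = r ∧ (7, l) ∈ dlFix viewW.1 I) ↔ _
  rw [hE, hW]
  simp only [VE, VW, Prod.mk.injEq, true_and]
  grind

lemma VE_mem_dlViewImage_iff {I : Inst D} (hI : overSchema baseSchema I) {u v : D} :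
    VE u v ∈ dlViewImage views I ↔ E u v ∈ I := by
  simp [mem_dlViewImage_iff hI]

lemma VW_mem_dlViewImage_iff {I : Inst D} (hI : overSchema baseSchema I) {u : D} :
    VW u ∈ dlViewImage views I ↔ ∃ k, HasUPath I k u := by
  simp [mem_dlViewImage_iff hI]

lemma bcqHolds_query_iff {I : Inst D} : bcqHolds query I ↔ Nonempty D ∧ G ∈ I :=
  ⟨fun ⟨h, hh⟩ => ⟨⟨h 0⟩, by simpa using hh G (by simp [query])⟩,
    fun ⟨⟨d⟩, hG⟩ => ⟨fun _ => d, by simpa [query] using hG⟩⟩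

namespace SigmaClosed

variable {I : Inst D}

lemma exists_chain [Nonempty D] (hI : SigmaClosed I) (hG : G ∈ I) :
    ∃ c : ℕ → D, ∀ n, A (c n) ∈ I ∧ E (c n) (c (n + 1)) ∈ I := by
  obtain ⟨x, hx⟩ := hI.A_of_G hG
  choose! f hfE hfA using hI.E_of_A
  have hA : ∀ n, A (f^[n] x) ∈ I := fun n => by
    induction n with
    | zero => exact hx
    | succ n ih => rw [Function.iterate_succ_apply']; exact hfA _ ih
  refine ⟨fun n => f^[n] x, fun n => ⟨hA n, ?_⟩⟩
  simpa only [Function.iterate_succ_apply'] using hfE _ (hA n)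

lemma G_of_T_of_hasUPath (hI : SigmaClosed I) : ∀ {l : ℕ} {y : D},
    T y ∈ I → HasUPath I l y → G ∈ I
  | 0, _, hT, hU => hI.G_of_T _ hT hU
  | _ + 1, _, hT, ⟨_, hE, hv⟩ => hI.G_of_T_of_hasUPath (hI.T_of_T _ _ hT hE) hv

lemma G_of_R_of_hasUPath (hI : SigmaClosed I) : ∀ {k l : ℕ} {x y : D}, k ≤ l →
    R x y ∈ I → HasUPath I k x → HasUPath I l y → G ∈ I
  | 0, _, _, _, _, hR, hx, hy => hI.G_of_T_of_hasUPath (hI.T_of_U _ _ hx hR) hy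
  | _ + 1, 0, _, _, hkl, _, _, _ => absurd hkl (by omega)
  | _ + 1, _ + 1, _, _, hkl, hR, ⟨_, hx, hx'⟩, ⟨_, hy, hy'⟩ =>
    hI.G_of_R_of_hasUPath (by omega) (hI.R_of_R _ _ _ _ hR hx hy) hx' hy'

end SigmaClosed

lemma monDet_query :
    monDet baseSchema (fun _ I => bcqHolds query I) (fun _ I => dlViewImage views I) sigma := by
  classical
  intro D I I' hI hI' hσ hσ' hvim hq
  obtain ⟨hD, hG⟩ := bcqHolds_query_iff.1 hq
  have hc := SigmaClosed.of_sigmaHolds hσ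
  have hc' := SigmaClosed.of_sigmaHolds hσ'
  obtain ⟨c, hchain⟩ := hc.exists_chain hG
  have hE' : ∀ n, E (c n) (c (n + 1)) ∈ I' := fun n =>
    (VE_mem_dlViewImage_iff hI').1 (hvim ((VE_mem_dlViewImage_iff hI).2 (hchain n).2))
  have hpath : ∀ n, ∃ k, HasUPath I' k (c n) := fun n =>
    (VW_mem_dlViewImage_iff hI').1
      (hvim ((VW_mem_dlViewImage_iff hI).2 ⟨0, hc.U_of_A _ (hchain n).1⟩))
  refine bcqHolds_query_iff.2 ⟨hD, by_contra fun hG' => ?_⟩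
  obtain ⟨n, hn⟩ := WellFounded.not_rel_apply_succ (r := (· < ·)) fun n => Nat.find (hpath n)
  exact hG' (hc'.G_of_R_of_hasUPath (not_lt.1 hn) (hc'.R_of_E _ _ (hE' n))
    (Nat.find_spec (hpath n)) (Nat.find_spec (hpath (n + 1))))

/-- The chase of `Canondb query` under `sigma`: the left summand holds the variables of
`query`, the right one the chain. -/
def chase : Inst (ℕ ⊕ ℕ) :=
  {a | a = G ∨ ∃ n : ℕ, a = A (inr n) ∨ a = U (inr n) ∨ a = E (inr n) (inr (n + 1)) ∨
    a = R (inr n) (inr (n + 1)) ∨ a = T (inr (n + 1))}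

section Chase

variable {x y : ℕ ⊕ ℕ}

lemma G_mem_chase : G ∈ chase := Or.inl rfl
lemma A_mem_chase_iff : A x ∈ chase ↔ ∃ n, x = inr n := by simp [chase, G, A, U, E, R, T]
lemma U_mem_chase_iff : U x ∈ chase ↔ ∃ n, x = inr n := by simp [chase, G, A, U, E, R, T]
lemma E_mem_chase_iff : E x y ∈ chase ↔ ∃ n, x = inr n ∧ y = inr (n + 1) := by
  simp [chase, G, A, U, E, R, T]
lemma R_mem_chase_iff : R x y ∈ chase ↔ ∃ n, x = inr n ∧ y = inr (n + 1) := by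
  simp [chase, G, A, U, E, R, T]
lemma T_mem_chase_iff : T x ∈ chase ↔ ∃ n, x = inr (n + 1) := by simp [chase, G, A, U, E, R, T]

end Chase

lemma overSchema_chase : overSchema baseSchema chase := by
  rintro a (rfl | ⟨n, rfl | rfl | rfl | rfl | rfl⟩) <;> simp [G, A, U, E, R, T, baseSchema]

lemma sigmaClosed_chase : SigmaClosed chase := by
  constructor
  · exact fun _ => ⟨inr 0, A_mem_chase_iff.2 ⟨0, rfl⟩⟩
  all_goals
    simp only [G_mem_chase, A_mem_chase_iff, U_mem_chase_iff, E_mem_chase_iff, R_mem_chase_iff,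
      T_mem_chase_iff]
    grind

lemma isUnivModel_chase : isUnivModel sigma (canondb query) chase inl := by
  refine ⟨fun a ha => ?_, sigmaClosed_chase.sigmaHolds, fun F J f hf hJ => ?_⟩
  · obtain rfl : a = G := by simpa [canondb, query] using ha
    exact G_mem_chase
  have hG : G ∈ J := by simpa using hf G (by simp [canondb, query])
  have : Nonempty F := ⟨f 0⟩
  have hJ := SigmaClosed.of_sigmaHolds hJ
  obtain ⟨c, hc⟩ := hJ.exists_chain hG
  have hU n : U (c n) ∈ J := hJ.U_of_A _ (hc n).1
  have hR n : R (c n) (c (n + 1)) ∈ J := hJ.R_of_E _ _ (hc n).2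
  refine ⟨Sum.elim f c, ?_, fun _ => rfl⟩
  rintro a (rfl | ⟨n, rfl | rfl | rfl | rfl | rfl⟩)
  · exact hG
  · exact (hc n).1
  · exact hU n
  · exact (hc n).2
  · exact hR n
  · exact hJ.T_of_U _ _ (hU n) (hR n)

lemma mem_dlViewImage_chase {a : Atom (ℕ ⊕ ℕ)} (ha : a ∈ dlViewImage views chase) :
    (∃ n, a = VE (inr n) (inr (n + 1))) ∨ ∃ n, a = VW (inr n) := by
  rcases (mem_dlViewImage_iff overSchema_chase).1 ha with ⟨u, v, huv, rfl⟩ | ⟨u, k, hk, rfl⟩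
  · obtain ⟨n, rfl, rfl⟩ := E_mem_chase_iff.1 huv
    exact Or.inl ⟨n, rfl⟩
  · cases k with
    | zero => obtain ⟨n, rfl⟩ := U_mem_chase_iff.1 hk; exact Or.inr ⟨n, rfl⟩
    | succ k =>
      obtain ⟨v, huv, -⟩ := hk
      obtain ⟨n, rfl, -⟩ := E_mem_chase_iff.1 huv
      exact Or.inr ⟨n, rfl⟩

lemma btvipCQ_query : btvipCQ baseSchema query views sigma := by
  refine ⟨1, ℕ ⊕ ℕ, chase, inl, isUnivModel_chase, overSchema_chase,
    hasTreewidthLE_one_of_chain inr inr_injective fun a ha => ?_⟩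
  rcases mem_dlViewImage_chase ha with ⟨n, rfl⟩ | ⟨n, rfl⟩ <;> exact ⟨n, by simp [VE, VW]⟩

def truncatedChain (M : ℕ) : Inst (ℕ ⊕ ℕ) :=
  {a | a = U (inr M) ∨ ∃ n < M, a = E (inr n) (inr (n + 1)) ∨ a = R (inr n) (inr (n + 1))}

section TruncatedChain

variable {M : ℕ} {x y : ℕ ⊕ ℕ}

lemma G_notMem_truncatedChain : G ∉ truncatedChain M := by simp [truncatedChain, G, U, E, R]
lemma A_notMem_truncatedChain : A x ∉ truncatedChain M := by simp [truncatedChain, A, U, E, R]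
lemma T_notMem_truncatedChain : T x ∉ truncatedChain M := by simp [truncatedChain, T, U, E, R]
lemma U_mem_truncatedChain_iff : U x ∈ truncatedChain M ↔ x = inr M := by
  simp [truncatedChain, U, E, R]
lemma E_mem_truncatedChain_iff :
    E x y ∈ truncatedChain M ↔ ∃ n < M, x = inr n ∧ y = inr (n + 1) := by
  simp [truncatedChain, U, E, R]
lemma R_mem_truncatedChain_iff :
    R x y ∈ truncatedChain M ↔ ∃ n < M, x = inr n ∧ y = inr (n + 1) := by
  simp [truncatedChain, U, E, R]

end TruncatedChain

lemma overSchema_truncatedChain (M : ℕ) : overSchema baseSchema (truncatedChain M) := by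
  rintro a (rfl | ⟨n, -, rfl | rfl⟩) <;> simp [U, E, R, baseSchema]

lemma sigmaClosed_truncatedChain (M : ℕ) : SigmaClosed (truncatedChain M) := by
  constructor <;>
    simp only [G_notMem_truncatedChain, A_notMem_truncatedChain, T_notMem_truncatedChain,
      U_mem_truncatedChain_iff, E_mem_truncatedChain_iff, R_mem_truncatedChain_iff] <;>
    grind

lemma hasUPath_truncatedChain {M : ℕ} : ∀ {k n : ℕ}, n + k = M →
    HasUPath (truncatedChain M) k (inr n)
  | 0, _, rfl => U_mem_truncatedChain_iff.2 rfl
  | k + 1, n, h => ⟨inr (n + 1), E_mem_truncatedChain_iff.2 ⟨n, by omega, rfl, rfl⟩,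
      hasUPath_truncatedChain (by omega)⟩

lemma eventually_mem_dlViewImage_truncatedChain {a : Atom (ℕ ⊕ ℕ)}
    (ha : a ∈ dlViewImage views chase) :
    ∀ᶠ M in Filter.atTop, a ∈ dlViewImage views (truncatedChain M) := by
  rcases mem_dlViewImage_chase ha with ⟨n, rfl⟩ | ⟨n, rfl⟩
  · filter_upwards [Filter.eventually_gt_atTop n] with M hM
    exact (VE_mem_dlViewImage_iff (overSchema_truncatedChain M)).2
      (E_mem_truncatedChain_iff.2 ⟨n, hM, rfl, rfl⟩)
  · filter_upwards [Filter.eventually_ge_atTop n] with M hM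
    exact (VW_mem_dlViewImage_iff (overSchema_truncatedChain M)).2
      ⟨M - n, hasUPath_truncatedChain (by omega)⟩

lemma not_isRewriting_query {holdsR : (D : Type) → Inst D → Prop}
    (hR : FinitelyWitnessed holdsR) :
    ¬ isRewriting baseSchema (fun _ I => bcqHolds query I) (fun _ I => dlViewImage views I) sigma
      holdsR :=
  not_isRewriting_of_finitelyWitnessed hR (l := Filter.atTop) truncatedChain overSchema_chase
    sigmaClosed_chase.sigmaHolds (bcqHolds_query_iff.2 ⟨⟨inl 0⟩, G_mem_chase⟩)
    overSchema_truncatedChain (fun M => (sigmaClosed_truncatedChain M).sigmaHolds)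
    (fun _ hq => G_notMem_truncatedChain (bcqHolds_query_iff.1 hq).2)
    fun _ => eventually_mem_dlViewImage_truncatedChain

end ChainExample

/-- failure of Datalog rewritability.
There are a finite set `sg` of TGDs, a Boolean CQ `q`, and a set `V` of views
with frontier-guarded Datalog definitions such that `(q, V, sg)` has the
bounded treewidth view image property, `q` is monotonically determined by `V`
w.r.t. `sg` over all instances, and yet there is no Datalog rewriting of `q`
over `V` w.r.t. `sg`; indeed there is no rewriting expressible as a (possibly
infinite) disjunction of CQs over the view schema. -/
theorem failure_of_datalog_rewritability :
    ∃ (S SV : Finset RelSym) (sg : List TGD) (q : BCQ) (V : DLViews),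
      Disjoint S SV ∧
      (∀ τ ∈ sg, tgdOver S τ) ∧
      bcqOver S q ∧
      (∀ vd ∈ V, vd.1 ∈ SV ∧ dlOver S vd.2 ∧ isFGDL S vd.2) ∧
      btvipCQ S q V sg ∧
      monDet S (fun _ I => bcqHolds q I) (fun _ I => dlViewImage V I) sg ∧
      (¬ ∃ R : DatalogQuery, dlOver SV R ∧ dlBoolean R ∧
          isRewriting S (fun _ I => bcqHolds q I) (fun _ I => dlViewImage V I) sg
            (fun _ J => dlHolds R J)) ∧
      (¬ ∃ (ι : Type) (F : ι → BCQ), (∀ i : ι, bcqOver SV (F i)) ∧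
          isRewriting S (fun _ I => bcqHolds q I) (fun _ I => dlViewImage V I) sg
            (fun _ J => ∃ i : ι, bcqHolds (F i) J)) := by
  refine ⟨ChainExample.baseSchema, ChainExample.viewSchema, ChainExample.sigma,
    ChainExample.query, ChainExample.views, by decide, by unfold tgdOver; decide,
    by unfold bcqOver; decide, by unfold dlOver isIDB isFGDL; decide,
    ChainExample.btvipCQ_query, ChainExample.monDet_query, ?_, ?_⟩
  · rintro ⟨P, -, -, hrw⟩
    exact ChainExample.not_isRewriting_query (finitelyWitnessed_dlHolds P) hrw
  · rintro ⟨ι, F, -, hrw⟩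
    exact ChainExample.not_isRewriting_query (finitelyWitnessed_exists_bcqHolds F) hrw

end MonDetPaper
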